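/- arXiv:2511.15602 — 9 statements merged into one kernel-verified Lean document; each statement's English description precedes it below -/
import Mathlib

section
/- Let G and H be finite groups of coprime orders. Then the endomorphism digraph of G × H is the strong product of the endomorphism digraphs of G and H: for (g₁,h₁) ≠ (g₂,h₂), there is an endomorphism of G × H sending (g₁,h₁) to (g₂,h₂) if and only if some endomorphism of G sends g₁ to g₂ and some endomorphism of H sends h₁ to h₂. -/
/-- For finite groups `G`, `H` of coprime orders, the endomorphism digraph of
`G × H` is the strong product of the endomorphism digraphs of `G` and `H`. -/
theorem endomorphism_digraph_strong_product {G H : Type*} [Group G] [Group H]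
    [Fintype G] [Fintype H]
    (hco : Nat.Coprime (Fintype.card G) (Fintype.card H))
    (g₁ g₂ : G) (h₁ h₂ : H) (hne : (g₁, h₁) ≠ (g₂, h₂)) :
    (∃ f : Monoid.End (G × H), f (g₁, h₁) = (g₂, h₂)) ↔
      (∃ f : Monoid.End G, f g₁ = g₂) ∧ (∃ f : Monoid.End H, f h₁ = h₂) := by
  constructor
  · rintro ⟨f, hf⟩
    have h2 : (f (g₁, 1)).2 = 1 := by
      rw [← orderOf_eq_one_iff]
      have hd1 : orderOf ((f (g₁, 1)).2) ∣ Fintype.card G := by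
        have : orderOf ((f (g₁, 1)).2) ∣ orderOf (f (g₁, 1)) :=
          orderOf_snd_dvd_orderOf
        refine this.trans ((orderOf_map_dvd f _).trans ?_)
        have : orderOf ((g₁, (1 : H))) = orderOf g₁ := by
          rw [Prod.orderOf, orderOf_one, Nat.lcm_one_right]
        rw [this]
        exact orderOf_dvd_card
      have hd2 : orderOf ((f (g₁, 1)).2) ∣ Fintype.card H := orderOf_dvd_card
      exact Nat.eq_one_of_dvd_coprimes hco hd1 hd2
    have h1 : (f (1, h₁)).1 = 1 := by
      rw [← orderOf_eq_one_iff]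
      have hd2 : orderOf ((f (1, h₁)).1) ∣ Fintype.card H := by
        have : orderOf ((f (1, h₁)).1) ∣ orderOf (f (1, h₁)) :=
          orderOf_fst_dvd_orderOf
        refine this.trans ((orderOf_map_dvd f _).trans ?_)
        have : orderOf (((1 : G), h₁)) = orderOf h₁ := by
          rw [Prod.orderOf, orderOf_one, Nat.lcm_one_left]
        rw [this]
        exact orderOf_dvd_card
      have hd1 : orderOf ((f (1, h₁)).1) ∣ Fintype.card G := orderOf_dvd_card
      exact Nat.eq_one_of_dvd_coprimes hco.symm hd2 hd1
    have hsplit : f (g₁, h₁) = ((f (g₁, 1)).1, (f (1, h₁)).2) := by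
      have : (g₁, h₁) = (g₁, (1 : H)) * ((1 : G), h₁) := by simp
      rw [this, map_mul, Prod.mul_def, h2, h1, mul_one, one_mul]
    rw [hsplit] at hf
    refine ⟨⟨(MonoidHom.fst G H).comp (f.comp (MonoidHom.inl G H)), ?_⟩,
      ⟨(MonoidHom.snd G H).comp (f.comp (MonoidHom.inr G H)), ?_⟩⟩
    · exact congrArg Prod.fst hf
    · exact congrArg Prod.snd hf
  · rintro ⟨⟨f₁, hf₁⟩, ⟨f₂, hf₂⟩⟩
    exact ⟨(f₁.prodMap f₂ : G × H →* G × H), Prod.ext hf₁ hf₂⟩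
end

section
/- The endomorphism graph EG(Z_n) is a complete graph if and only if n is a prime power (or n = 1). -/
lemma end_exists_iff (n : ℕ) [NeZero n] (x y : ZMod n) :
    (∃ f : AddMonoid.End (ZMod n), f x = y) ↔ x ∣ y := by
  constructor
  · rintro ⟨f, hf⟩
    refine ⟨f 1, ?_⟩
    have hx : x = x.val • (1 : ZMod n) := by
      simp [nsmul_eq_mul, ZMod.natCast_val, ZMod.cast_id]
    have hfx : f x = x * f 1 := by
      nth_rewrite 1 [hx]
      rw [map_nsmul, nsmul_eq_mul, ZMod.natCast_val, ZMod.cast_id]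
    rw [← hf, hfx]
  · rintro ⟨c, rfl⟩
    exact ⟨AddMonoidHom.mulLeft c, mul_comm c x⟩

lemma gcd_dvd_cast_dvd (n a b : ℕ) (h : Nat.gcd a n ∣ b) :
    (a : ZMod n) ∣ (b : ZMod n) := by
  have h1 : (Nat.gcd a n : ZMod n) ∣ (b : ZMod n) := by
    obtain ⟨c, rfl⟩ := h
    push_cast
    exact Dvd.intro c rfl
  refine dvd_trans ?_ h1
  have := Nat.gcd_eq_gcd_ab a n
  have h2 : ((Nat.gcd a n : ℤ) : ZMod n) = ((a * Nat.gcdA a n + n * Nat.gcdB a n : ℤ) : ZMod n) := by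
    rw [← this]
  push_cast at h2
  simp [ZMod.natCast_self] at h2
  exact ⟨(Nat.gcdA a n : ZMod n), by rw [h2]⟩

/-- The endomorphism graph of `Z_n` is complete iff `n` is a prime power
(or `n = 1`). -/
theorem zmod_endomorphism_graph_complete_iff (n : ℕ) (hn : 0 < n) :
    (∀ x y : ZMod n, x ≠ y →
        (∃ f : AddMonoid.End (ZMod n), f x = y) ∨
        (∃ f : AddMonoid.End (ZMod n), f y = x)) ↔
      IsPrimePow n ∨ n = 1 := by
  have : NeZero n := ⟨hn.ne'⟩
  constructor
  · intro h
    by_contra hc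
    push_neg at hc
    obtain ⟨hpp, hn1⟩ := hc
    -- n has two distinct prime factors
    set p := n.minFac with hp
    have hppr : p.Prime := Nat.minFac_prime hn1
    have hpd : p ∣ n := Nat.minFac_dvd n
    set m := n / p ^ (n.factorization p) with hm
    have hordn : p ^ (n.factorization p) * m = n := Nat.ordProj_mul_ordCompl_eq_self n p
    have hpm : ¬ p ∣ m := Nat.not_dvd_ordCompl hppr hn.ne'
    have hm1 : m ≠ 1 := by
      intro hm1
      apply hpp
      rw [hm1, mul_one] at hordn
      exact ⟨p, n.factorization p, hppr.prime,
        Nat.Prime.factorization_pos_of_dvd hppr hn.ne' hpd, hordn⟩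
    set q := m.minFac with hq
    have hqpr : q.Prime := Nat.minFac_prime hm1
    have hqm : q ∣ m := Nat.minFac_dvd m
    have hqd : q ∣ n := hqm.trans (Nat.ordCompl_dvd n p)
    have hpq : p ≠ q := fun he => hpm (he ▸ hqm)
    -- p*q ∣ n so p,q < n
    have hcop : Nat.Coprime p q := (Nat.coprime_primes hppr hqpr).mpr hpq
    have hpqd : p * q ∣ n := hcop.mul_dvd_of_dvd_of_dvd hpd hqd
    have hpqn : p * q ≤ n := Nat.le_of_dvd hn hpqd
    have hpn : p < n := lt_of_lt_of_le (lt_mul_of_one_lt_right hppr.pos hqpr.one_lt) hpqn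
    have hqn : q < n := lt_of_lt_of_le (lt_mul_of_one_lt_left hqpr.pos hppr.one_lt) hpqn
    have hne : (p : ZMod n) ≠ (q : ZMod n) := by
      intro he
      apply hpq
      have := congrArg ZMod.val he
      rwa [ZMod.val_cast_of_lt hpn, ZMod.val_cast_of_lt hqn] at this
    have key : ∀ a b : ℕ, a.Prime → b.Prime → a ≠ b → a ∣ n → ¬ ((a : ZMod n) ∣ (b : ZMod n)) := by
      rintro a b ha hb hab had ⟨c, hc⟩
      have hb0 : (b : ZMod a) = 0 := by
        have haI : NeZero a := ⟨ha.pos.ne'⟩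
        have := congrArg (ZMod.castHom had (ZMod a)) hc
        rw [map_natCast, map_mul, map_natCast, ZMod.natCast_self, zero_mul] at this
        exact this
      rw [ZMod.natCast_eq_zero_iff] at hb0
      exact hab ((Nat.prime_dvd_prime_iff_eq ha hb).mp hb0)
    rcases h (p : ZMod n) (q : ZMod n) hne with ⟨f, hf⟩ | ⟨f, hf⟩
    · have := (end_exists_iff n _ _).mp ⟨f, hf⟩
      exact key p q hppr hqpr hpq hpd this
    · have := (end_exists_iff n _ _).mp ⟨f, hf⟩
      exact key q p hqpr hppr (Ne.symm hpq) hqd this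
  · rintro (⟨p, k, hp, hk, rfl⟩ | rfl)
    · intro x y hxy
      have hx : (x.val : ZMod (p^k)) = x := by rw [ZMod.natCast_val, ZMod.cast_id]
      have hy : (y.val : ZMod (p^k)) = y := by rw [ZMod.natCast_val, ZMod.cast_id]
      have hpn : p.Prime := hp.nat_prime
      obtain ⟨i, hi, hdi⟩ := (Nat.dvd_prime_pow hpn).mp (Nat.gcd_dvd_right x.val (p^k))
      obtain ⟨j, hj, hdj⟩ := (Nat.dvd_prime_pow hpn).mp (Nat.gcd_dvd_right y.val (p^k))
      rcases le_total i j with hij | hij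
      · left
        rw [end_exists_iff, ← hx, ← hy]
        apply gcd_dvd_cast_dvd
        calc Nat.gcd x.val (p^k) = p ^ i := hdi
          _ ∣ p ^ j := pow_dvd_pow p hij
          _ = Nat.gcd y.val (p^k) := hdj.symm
          _ ∣ y.val := Nat.gcd_dvd_left _ _
      · right
        rw [end_exists_iff, ← hx, ← hy]
        apply gcd_dvd_cast_dvd
        calc Nat.gcd y.val (p^k) = p ^ j := hdj
          _ ∣ p ^ i := pow_dvd_pow p hij
          _ = Nat.gcd x.val (p^k) := hdi.symm
          _ ∣ x.val := Nat.gcd_dvd_left _ _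
    · intro x y hxy
      exact absurd (Subsingleton.elim x y) hxy
end

section
/- Let n = p₁^{n₁}⋯p_k^{n_k} with distinct primes p_i. List the primes with multiplicity in nonincreasing order as (q₁,…,q_m) where m = n₁+⋯+n_k, and set r₀ = 1, r_i = q₁⋯q_i. Then the clique number of the endomorphism graph EG(Z_n) equals Σ_{i=0}^{m} φ(r_i), where φ is Euler's totient function. -/
open Nat ArithmeticFunction List
open scoped ArithmeticFunction.Omega

section Helpers

private lemma phi_mul_prime_le {p : ℕ} (a : ℕ) (hp : p.Prime) :
    Nat.totient (a * p) ≤ p * Nat.totient a := by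
  by_cases h : p ∣ a
  · rw [mul_comm a p, Nat.totient_mul_of_prime_of_dvd hp h]
  · rw [Nat.totient_mul ((hp.coprime_iff_not_dvd.mpr h).symm), Nat.totient_prime hp,
      mul_comm]
    exact Nat.mul_le_mul_right _ (Nat.sub_le p 1)

private lemma le_phi_mul_prime {p : ℕ} (a : ℕ) (hp : p.Prime) :
    (p - 1) * Nat.totient a ≤ Nat.totient (a * p) := by
  by_cases h : p ∣ a
  · rw [mul_comm a p, Nat.totient_mul_of_prime_of_dvd hp h]
    exact Nat.mul_le_mul_right _ (Nat.sub_le p 1)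
  · rw [Nat.totient_mul ((hp.coprime_iff_not_dvd.mpr h).symm), Nat.totient_prime hp,
      mul_comm]

private lemma phi_swap {p q : ℕ} (a : ℕ) (hp : p.Prime) (hq : q.Prime) (hpq : p ≤ q) :
    Nat.totient (a * p) ≤ Nat.totient (a * q) := by
  rcases eq_or_lt_of_le hpq with rfl | hlt
  · exact le_rfl
  · calc Nat.totient (a * p) ≤ p * Nat.totient a := phi_mul_prime_le a hp
      _ ≤ (q - 1) * Nat.totient a := Nat.mul_le_mul_right _ (by omega)
      _ ≤ Nat.totient (a * q) := le_phi_mul_prime a hq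

private lemma phi_mul_mono {Q a b : ℕ} (hQ : Q.Prime) (hab : Nat.totient a ≤ Nat.totient b)
    (hdvd : Q ∣ a → Q ∣ b) : Nat.totient (Q * a) ≤ Nat.totient (Q * b) := by
  by_cases h : Q ∣ a
  · rw [Nat.totient_mul_of_prime_of_dvd hQ h, Nat.totient_mul_of_prime_of_dvd hQ (hdvd h)]
    exact Nat.mul_le_mul_left _ hab
  · rw [mul_comm Q a, Nat.totient_mul ((hQ.coprime_iff_not_dvd.mpr h).symm),
      Nat.totient_prime hQ, mul_comm]
    calc (Q - 1) * Nat.totient a ≤ (Q - 1) * Nat.totient b := Nat.mul_le_mul_left _ hab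
      _ ≤ Nat.totient (b * Q) := le_phi_mul_prime b hQ
      _ = Nat.totient (Q * b) := by rw [mul_comm]

private lemma omega_le_of_dvd {e N : ℕ} (hN : N ≠ 0) (h : e ∣ N) : Ω e ≤ Ω N := by
  obtain ⟨t, rfl⟩ := h
  have he : e ≠ 0 := by rintro rfl; simp at hN
  have ht : t ≠ 0 := by rintro rfl; simp at hN
  rw [cardFactors_mul he ht]; omega

private lemma omega_pos {t : ℕ} (h0 : t ≠ 0) (h1 : t ≠ 1) : 1 ≤ Ω t := by
  rw [cardFactors_apply]
  by_contra hc
  push_neg at hc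
  have : t.primeFactorsList = [] := List.length_eq_zero_iff.mp (by omega)
  rcases (Nat.primeFactorsList_eq_nil t).mp this with rfl | rfl <;> simp at h0 h1

private lemma omega_lt_of_dvd {e e' : ℕ} (h0 : e' ≠ 0) (h : e ∣ e') (hne : e ≠ e') :
    Ω e < Ω e' := by
  obtain ⟨t, rfl⟩ := h
  have he : e ≠ 0 := by rintro rfl; simp at h0
  have ht : t ≠ 0 := by rintro rfl; simp at h0
  have ht1 : t ≠ 1 := by rintro rfl; simp at hne
  rw [cardFactors_mul he ht]
  have := omega_pos ht ht1
  omega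

private lemma omega_prime_list_prod {L : List ℕ} (h : ∀ p ∈ L, p.Prime) :
    Ω L.prod = L.length := by
  induction L with
  | nil => simp
  | cons Q L ih =>
    have hQ : Q.Prime := h Q (by simp)
    have hL : ∀ p ∈ L, p.Prime := fun p hp => h p (by simp [hp])
    have hprod : L.prod ≠ 0 := by
      have : 0 < L.prod := List.prod_pos fun p hp => (hL p hp).pos
      omega
    rw [List.prod_cons, cardFactors_mul hQ.ne_zero hprod, cardFactors_apply_prime hQ, ih hL,
      List.length_cons]
    omega

private lemma key_lemma : ∀ (L : List ℕ), (∀ p ∈ L, p.Prime) → List.Pairwise (· ≥ ·) L →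
    ∀ e, e ∣ L.prod → Nat.totient e ≤ Nat.totient ((L.take (Ω e)).prod) := by
  intro L
  induction L with
  | nil =>
    intro _ _ e he
    rw [List.prod_nil] at he
    rw [Nat.dvd_one.mp he]
    simp
  | cons Q L ih =>
    intro hpr hsort e he
    have hQ : Q.Prime := hpr Q (by simp)
    have hLpr : ∀ p ∈ L, p.Prime := fun p hp => hpr p (by simp [hp])
    have hLsort : List.Pairwise (· ≥ ·) L := (List.pairwise_cons.mp hsort).2
    have hQge : ∀ p ∈ L, p ≤ Q := (List.pairwise_cons.mp hsort).1
    have hLpos : 0 < L.prod := List.prod_pos fun p hp => (hLpr p hp).pos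
    by_cases hQe : Q ∣ e
    · obtain ⟨e', rfl⟩ := hQe
      have he' : e' ∣ L.prod := by
        rw [List.prod_cons] at he
        exact (mul_dvd_mul_iff_left (a := Q) (by exact_mod_cast hQ.ne_zero)).mp he
      have he'0 : e' ≠ 0 := by rintro rfl; rw [Nat.zero_dvd.mp he'] at hLpos; omega
      have hstep : Ω (Q * e') = Ω e' + 1 := by
        rw [cardFactors_mul hQ.ne_zero he'0, cardFactors_apply_prime hQ]; omega
      rw [hstep, List.take_succ_cons, List.prod_cons]
      apply phi_mul_mono hQ (ih hLpr hLsort e' he')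
      intro hQe'
      have hQL : Q ∈ L := by
        obtain ⟨p, hpL, hQp⟩ := (Prime.dvd_prod_iff hQ.prime).mp (hQe'.trans he')
        rwa [((Nat.prime_dvd_prime_iff_eq hQ (hLpr p hpL)).mp hQp)]
      obtain ⟨a, L'', rfl⟩ : ∃ a L'', L = a :: L'' := by
        cases L with
        | nil => simp at hQL
        | cons a L'' => exact ⟨a, L'', rfl⟩
      have ha : a = Q := by
        have h1 : a ≤ Q := hQge a (by simp)
        rcases List.mem_cons.mp hQL with h | h
        · omega
        · have := (List.pairwise_cons.mp hLsort).1 Q h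
          omega
      have hpos : 1 ≤ Ω e' :=
        omega_pos he'0 (by rintro rfl; exact Nat.Prime.not_dvd_one hQ hQe')
      obtain ⟨k, hk⟩ : ∃ k, Ω e' = k + 1 := ⟨Ω e' - 1, by omega⟩
      rw [hk, List.take_succ_cons, List.prod_cons, ha]
      exact Dvd.intro _ rfl
    · have hcop : Nat.Coprime e Q := (hQ.coprime_iff_not_dvd.mpr hQe).symm
      have he' : e ∣ L.prod := by
        rw [List.prod_cons] at he
        exact (Nat.Coprime.dvd_of_dvd_mul_left hcop) he
      have IH := ih hLpr hLsort e he'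
      refine IH.trans ?_
      rcases Nat.eq_zero_or_pos (Ω e) with h0 | hpos
      · rw [h0]; simp
      obtain ⟨k, hk⟩ : ∃ k, Ω e = k + 1 := ⟨Ω e - 1, by omega⟩
      have hlen : Ω e ≤ L.length := by
        have h2 := omega_le_of_dvd (by omega) he'
        rwa [omega_prime_list_prod hLpr] at h2
      have hkl : k < L.length := by omega
      rw [hk, List.take_succ_cons, List.prod_cons, List.prod_take_succ L k hkl]
      have hp := hLpr (L.get ⟨k, hkl⟩) (L.get_mem _)
      calc Nat.totient ((L.take k).prod * L.get ⟨k, hkl⟩)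
          ≤ Nat.totient ((L.take k).prod * Q) := phi_swap _ hp hQ (hQge _ (L.get_mem _))
        _ = Nat.totient (Q * (L.take k).prod) := by rw [mul_comm]

private lemma endo_iff {n : ℕ} (hn : 0 < n) (x y : ZMod n) :
    (∃ f : AddMonoid.End (ZMod n), f x = y) ↔ addOrderOf y ∣ addOrderOf x := by
  haveI : NeZero n := ⟨hn.ne'⟩
  constructor
  · rintro ⟨f, rfl⟩
    rw [addOrderOf_dvd_iff_nsmul_eq_zero, ← map_nsmul, addOrderOf_nsmul_eq_zero, _root_.map_zero]
  · intro h
    have hxv : ((x.val : ℕ) : ZMod n) = x := ZMod.natCast_rightInverse x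
    have hyv : ((y.val : ℕ) : ZMod n) = y := ZMod.natCast_rightInverse y
    set gx := n.gcd x.val with hgx
    set gy := n.gcd y.val with hgy
    have hx : addOrderOf x = n / gx := by
      rw [← hxv, ZMod.addOrderOf_coe _ hn.ne']
    have hy : addOrderOf y = n / gy := by
      rw [← hyv, ZMod.addOrderOf_coe _ hn.ne']
    have hgxd : gx ∣ n := Nat.gcd_dvd_left _ _
    have hgyd : gy ∣ n := Nat.gcd_dvd_left _ _
    have hgxp : 0 < gx := Nat.gcd_pos_of_pos_left _ hn
    have hgyp : 0 < gy := Nat.gcd_pos_of_pos_left _ hn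
    have hdvd : gx ∣ gy := by
      rw [hx, hy] at h
      obtain ⟨t, ht⟩ := h
      have e1 : gx * (n / gx) = n := Nat.mul_div_cancel' hgxd
      have e2 : gy * (n / gy) = n := Nat.mul_div_cancel' hgyd
      have hq : 0 < n / gy := Nat.div_pos (Nat.le_of_dvd hn hgyd) hgyp
      refine ⟨t, ?_⟩
      have heq : gy * (n / gy) = gx * t * (n / gy) := by
        calc gy * (n / gy) = n := e2
          _ = gx * (n / gx) := e1.symm
          _ = gx * (n / gy * t) := by rw [ht]
          _ = gx * t * (n / gy) := by ring
      exact Nat.eq_of_mul_eq_mul_right hq heq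
    obtain ⟨s, hs⟩ : gx ∣ y.val := hdvd.trans (Nat.gcd_dvd_right n y.val)
    have hbez : (gx : ℤ) = n * Nat.gcdA n x.val + x.val * Nat.gcdB n x.val :=
      Nat.gcd_eq_gcd_ab n x.val
    have hcast : (gx : ZMod n) = x * ((Nat.gcdB n x.val : ℤ) : ZMod n) := by
      have h2 := congrArg (fun z : ℤ => (z : ZMod n)) hbez
      push_cast at h2
      rwa [ZMod.natCast_self, zero_mul, zero_add, hxv] at h2
    refine ⟨AddMonoidHom.mulRight (((Nat.gcdB n x.val : ℤ) : ZMod n) * (s : ZMod n)), ?_⟩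
    show x * _ = y
    rw [← mul_assoc, ← hcast, ← hyv, hs]
    push_cast
    ring

private lemma card_order_eq {n d : ℕ} [NeZero n] (hd : d ∣ n) :
    (Finset.univ.filter (fun x : ZMod n => addOrderOf x = d)).card = Nat.totient d := by
  have h := IsAddCyclic.card_addOrderOf_eq_totient (α := ZMod n) (d := d)
    (by rwa [ZMod.card])
  rw [← h]

end Helpers

/-- The endomorphism graph of the cyclic group `Z_n`. -/
def EGZ (n : ℕ) : SimpleGraph (ZMod n) :=
  SimpleGraph.fromRel (fun x y => ∃ f : AddMonoid.End (ZMod n), f x = y)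

/-- The clique number of a simple graph. -/
noncomputable def cliqueNum {V : Type*} (G : SimpleGraph V) : ℕ :=
  sSup {k | ∃ s : Finset V, G.IsNClique k s}

set_option maxHeartbeats 1000000 in
/-- If the primes dividing `n` are listed with multiplicity in nonincreasing
order as `q₁, …, q_m`, and `r_i = q₁ ⋯ q_i` (with `r₀ = 1`), then the clique
number of `EG(Z_n)` is `∑_{i=0}^m φ(r_i)`. -/
theorem zmod_endomorphism_graph_cliqueNum (n m : ℕ) (hn : 0 < n)
    (q : Fin m → ℕ) (hq : ∀ i, (q i).Prime)
    (hmono : ∀ i j : Fin m, i ≤ j → q j ≤ q i)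
    (hprod : ∏ i, q i = n) :
    cliqueNum (EGZ n) =
      ∑ i ∈ Finset.range (m + 1),
        Nat.totient (∏ j ∈ Finset.univ.filter (fun j : Fin m => (j : ℕ) < i), q j) := by
  classical
  haveI : NeZero n := ⟨hn.ne'⟩
  set r : ℕ → ℕ := fun i => ∏ j ∈ Finset.univ.filter (fun j : Fin m => (j : ℕ) < i), q j
    with hrdef
  show cliqueNum (EGZ n) = ∑ i ∈ Finset.range (m + 1), Nat.totient (r i)
  set L : List ℕ := List.ofFn q with hLdef
  have hLpr : ∀ p ∈ L, p.Prime := by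
    intro p hp
    rw [hLdef, List.mem_ofFn] at hp
    obtain ⟨i, rfl⟩ := hp
    exact hq i
  have hLsort : List.Pairwise (· ≥ ·) L := by
    rw [hLdef, List.pairwise_ofFn]
    intro i j hij
    exact hmono i j hij.le
  have hLlen : L.length = m := List.length_ofFn
  have hLprod : L.prod = n := by rw [hLdef, List.prod_ofFn, hprod]
  have hrstep : ∀ (k : ℕ) (hk : k < m), r (k + 1) = q ⟨k, hk⟩ * r k := by
    intro k hk
    have hfil : Finset.univ.filter (fun j : Fin m => (j : ℕ) < k + 1)
        = insert (⟨k, hk⟩ : Fin m) (Finset.univ.filter (fun j : Fin m => (j : ℕ) < k)) := by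
      ext j
      simp [Fin.ext_iff]
      omega
    simp only [hrdef]
    rw [hfil, Finset.prod_insert (by simp)]
  have hrL : ∀ i, i ≤ m → r i = (L.take i).prod := by
    intro i
    induction i with
    | zero => intro _; simp [hrdef]
    | succ k ihk =>
      intro hk
      have hk' : k < m := hk
      have hkL : k < L.length := by omega
      rw [hrstep k hk', ihk (by omega), List.prod_take_succ L k hkL]
      have hget : L.get ⟨k, hkL⟩ = q ⟨k, hk'⟩ := by
        simp [hLdef, List.get_ofFn]
      rw [mul_comm, ← hget]
      rfl
  have hrdvdr : ∀ i j : ℕ, i ≤ j → r i ∣ r j := by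
    intro i j hij
    apply Finset.prod_dvd_prod_of_subset
    intro x hx
    simp at hx ⊢
    omega
  have hrdvd : ∀ i, r i ∣ n := by
    intro i
    rw [← hprod]
    apply Finset.prod_dvd_prod_of_subset
    intro x _
    simp
  have hrpos : ∀ i, 0 < r i := fun i => Nat.pos_of_dvd_of_pos (hrdvd i) hn
  have hrlt : ∀ i j, i < j → j ≤ m → r i < r j := by
    intro i j hij hjm
    have h1 : r (i + 1) ≤ r j := Nat.le_of_dvd (hrpos j) (hrdvdr _ _ (by omega))
    have h2 : r i < r (i + 1) := by
      rw [hrstep i (by omega)]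
      have h3 := (hq ⟨i, by omega⟩).two_le
      nlinarith [hrpos i]
    omega
  have hadj : ∀ x y : ZMod n, (EGZ n).Adj x y ↔
      x ≠ y ∧ (addOrderOf x ∣ addOrderOf y ∨ addOrderOf y ∣ addOrderOf x) := by
    intro x y
    rw [EGZ, SimpleGraph.fromRel_adj, endo_iff hn x y, endo_iff hn y x]
    tauto
  have hodvd : ∀ x : ZMod n, addOrderOf x ∣ n := by
    intro x
    have h := addOrderOf_dvd_card (x := x)
    rwa [ZMod.card] at h
  -- lower bound clique
  set S : Finset (ZMod n) :=
    (Finset.range (m + 1)).biUnion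
      (fun i => Finset.univ.filter fun x : ZMod n => addOrderOf x = r i) with hSdef
  have hrinj : ∀ i ∈ Finset.range (m + 1), ∀ j ∈ Finset.range (m + 1), r i = r j → i = j := by
    intro i hi j hj hij
    simp only [Finset.mem_range] at hi hj
    by_contra hne
    rcases Nat.lt_or_ge i j with h | h
    · exact absurd hij (hrlt i j h (by omega)).ne
    · have := hrlt j i (by omega) (by omega)
      omega
  have hScard : S.card = ∑ i ∈ Finset.range (m + 1), Nat.totient (r i) := by
    rw [hSdef, Finset.card_biUnion]
    · exact Finset.sum_congr rfl fun i _ => card_order_eq (hrdvd i)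
    · intro i hi j hj hne
      simp only [Finset.disjoint_left, Finset.mem_filter, Finset.mem_univ, true_and]
      intro x hx hx'
      exact hne (hrinj i hi j hj (hx ▸ hx'))
  have hSclique : (EGZ n).IsNClique (∑ i ∈ Finset.range (m + 1), Nat.totient (r i)) S := by
    constructor
    · intro x hx y hy hxy
      rw [Finset.mem_coe, hSdef, Finset.mem_biUnion] at hx hy
      obtain ⟨i, hi, hxi⟩ := hx
      obtain ⟨j, hj, hyj⟩ := hy
      simp only [Finset.mem_filter, Finset.mem_univ, true_and] at hxi hyj
      rw [hadj]
      refine ⟨hxy, ?_⟩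
      rcases le_total i j with h | h
      · left; rw [hxi, hyj]; exact hrdvdr i j h
      · right; rw [hxi, hyj]; exact hrdvdr j i h
    · exact hScard
  -- upper bound
  have hub : ∀ k ∈ {k | ∃ s : Finset (ZMod n), (EGZ n).IsNClique k s},
      k ≤ ∑ i ∈ Finset.range (m + 1), Nat.totient (r i) := by
    rintro k ⟨s, hclique, hcard⟩
    set T : Finset ℕ := s.image addOrderOf with hTdef
    have hcards : s.card = ∑ e ∈ T, (s.filter fun x => addOrderOf x = e).card :=
      Finset.card_eq_sum_card_image addOrderOf s
    have hOm : ∀ e ∈ T, Ω e ≤ m := by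
      intro e he
      obtain ⟨x, _, rfl⟩ := Finset.mem_image.mp he
      have h1 := omega_le_of_dvd hn.ne' (hodvd x)
      have h2 : Ω n = m := by rw [← hLprod, omega_prime_list_prod hLpr, hLlen]
      omega
    have hterm : ∀ e ∈ T,
        (s.filter fun x => addOrderOf x = e).card ≤ Nat.totient (r (Ω e)) := by
      intro e he
      have hedvd : e ∣ n := by
        obtain ⟨x, _, rfl⟩ := Finset.mem_image.mp he
        exact hodvd x
      calc (s.filter fun x => addOrderOf x = e).card
          ≤ (Finset.univ.filter fun x : ZMod n => addOrderOf x = e).card :=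
            Finset.card_le_card (fun y hy => by
              simp only [Finset.mem_filter, Finset.mem_univ, true_and]
              exact (Finset.mem_filter.mp hy).2)
        _ = Nat.totient e := card_order_eq hedvd
        _ ≤ Nat.totient ((L.take (Ω e)).prod) :=
            key_lemma L hLpr hLsort e (by rw [hLprod]; exact hedvd)
        _ = Nat.totient (r (Ω e)) := by rw [hrL (Ω e) (hOm e he)]
    have hOminj : ∀ e ∈ T, ∀ e' ∈ T, Ω e = Ω e' → e = e' := by
      intro e he e' he' hOe
      by_contra hne
      obtain ⟨x, hx, rfl⟩ := Finset.mem_image.mp he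
      obtain ⟨y, hy, rfl⟩ := Finset.mem_image.mp he'
      have hxy : x ≠ y := by rintro rfl; exact hne rfl
      have hadjxy := (hadj x y).mp
        (hclique (Finset.mem_coe.mpr hx) (Finset.mem_coe.mpr hy) hxy)
      have hx0 : addOrderOf x ≠ 0 := (addOrderOf_pos x).ne'
      have hy0 : addOrderOf y ≠ 0 := (addOrderOf_pos y).ne'
      rcases hadjxy.2 with h | h
      · exact absurd hOe (omega_lt_of_dvd hy0 h hne).ne
      · exact absurd hOe.symm (omega_lt_of_dvd hx0 h (Ne.symm hne)).ne
    calc k = s.card := hcard.symm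
      _ = ∑ e ∈ T, (s.filter fun x => addOrderOf x = e).card := hcards
      _ ≤ ∑ e ∈ T, Nat.totient (r (Ω e)) := Finset.sum_le_sum hterm
      _ = ∑ i ∈ T.image (fun e => Ω e), Nat.totient (r i) :=
          (Finset.sum_image (s := T) (g := fun e => Ω e)
            (f := fun i => Nat.totient (r i)) hOminj).symm
      _ ≤ ∑ i ∈ Finset.range (m + 1), Nat.totient (r i) := by
          apply Finset.sum_le_sum_of_subset
          intro i hi
          obtain ⟨e, he, rfl⟩ := Finset.mem_image.mp hi
          rw [Finset.mem_range]
          have := hOm e he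
          omega
  apply _root_.le_antisymm
  · exact csSup_le ⟨0, ∅, SimpleGraph.isNClique_empty.mpr rfl⟩ hub
  · exact le_csSup ⟨_, hub⟩ ⟨S, hSclique⟩
end

section
/- The endomorphism graphs of Z_4 and the Klein four-group Z_2 × Z_2 are both the complete graph K_4; hence non-isomorphic groups can have isomorphic endomorphism graphs. -/
/-- Multiplication-by-`c` endomorphism of `ZMod 4`. -/
def mulEnd (c : ZMod 4) : AddMonoid.End (ZMod 4) :=
  AddMonoidHom.mk' (fun x => c * x) (by intro a b; ring)

/-- A "matrix" endomorphism of the Klein four-group. -/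
def kleinEnd (p q r s : ZMod 2) : AddMonoid.End (ZMod 2 × ZMod 2) :=
  AddMonoidHom.mk' (fun z => (p * z.1 + q * z.2, r * z.1 + s * z.2))
    (by intro a b; simp [Prod.ext_iff]; constructor <;> ring)

/-- The endomorphism graphs of `Z_4` and the Klein four-group `Z_2 × Z_2` are
both the complete graph `K_4`, although the two groups are not isomorphic. -/
theorem zmod4_klein_same_endomorphism_graph :
    (∀ x y : ZMod 4, x ≠ y →
        (∃ f : AddMonoid.End (ZMod 4), f x = y) ∨
        (∃ f : AddMonoid.End (ZMod 4), f y = x)) ∧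
    (∀ x y : ZMod 2 × ZMod 2, x ≠ y →
        (∃ f : AddMonoid.End (ZMod 2 × ZMod 2), f x = y) ∨
        (∃ f : AddMonoid.End (ZMod 2 × ZMod 2), f y = x)) ∧
    ¬ Nonempty (ZMod 4 ≃+ ZMod 2 × ZMod 2) := by
  refine ⟨?_, ?_, ?_⟩
  · have h : ∀ x y : ZMod 4, ∃ c : ZMod 4, c * x = y ∨ c * y = x := by decide
    intro x y _
    obtain ⟨c, hc | hc⟩ := h x y
    · exact Or.inl ⟨mulEnd c, hc⟩
    · exact Or.inr ⟨mulEnd c, hc⟩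
  · have h : ∀ x y : ZMod 2 × ZMod 2, ∃ p q r s : ZMod 2,
        ((p * x.1 + q * x.2, r * x.1 + s * x.2) : ZMod 2 × ZMod 2) = y ∨
        ((p * y.1 + q * y.2, r * y.1 + s * y.2) : ZMod 2 × ZMod 2) = x := by decide
    intro x y _
    obtain ⟨p, q, r, s, hc | hc⟩ := h x y
    · exact Or.inl ⟨kleinEnd p q r s, hc⟩
    · exact Or.inr ⟨kleinEnd p q r s, hc⟩
  · rintro ⟨e⟩
    have hk : ∀ k : ZMod 2 × ZMod 2, k + k = 0 := by decide
    have h2 : e 2 = 0 := by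
      have := map_add e 1 1
      simpa [hk (e 1), show (1 : ZMod 4) + 1 = 2 by decide] using this
    have : (2 : ZMod 4) = 0 := e.injective (by simpa using h2)
    exact absurd this (by decide)
end

section
/- Let G = Z_{p^{u+v}} × Z_{p^u} × G₁ with p prime, u ≥ 1, v ≥ 2, and G₁ any finite abelian group. Then the elements a = (p^v, 0, 0) and b = (0, 1, 0) have the order of b dividing the order of a, but no endomorphism of G maps a to b. -/
/-- In `G = Z_{p^{u+v}} × Z_{p^u} × G₁` with `p` prime, `u ≥ 1`, `v ≥ 2`, the
order of `b = (0,1,0)` divides the order of `a = (p^v,0,0)`, yet no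
endomorphism of `G` maps `a` to `b`. -/
theorem no_endomorphism_despite_order_dvd (p u v : ℕ) (hp : p.Prime)
    (hu : 1 ≤ u) (hv : 2 ≤ v) {G₁ : Type*} [AddCommGroup G₁] [Fintype G₁] :
    addOrderOf ((0, 1, 0) : ZMod (p ^ (u + v)) × ZMod (p ^ u) × G₁) ∣
      addOrderOf ((((p : ZMod (p ^ (u + v))) ^ v), 0, 0) :
        ZMod (p ^ (u + v)) × ZMod (p ^ u) × G₁) ∧
    ¬ ∃ f : (ZMod (p ^ (u + v)) × ZMod (p ^ u) × G₁) →+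
          (ZMod (p ^ (u + v)) × ZMod (p ^ u) × G₁),
        f (((p : ZMod (p ^ (u + v))) ^ v), 0, 0) = (0, 1, 0) := by
  have hp1 : 1 < p := hp.one_lt
  constructor
  · have h1 : addOrderOf ((0, 1, 0) : ZMod (p ^ (u + v)) × ZMod (p ^ u) × G₁) = p ^ u := by
      rw [Prod.addOrderOf, Prod.addOrderOf, addOrderOf_zero, addOrderOf_zero]
      have : addOrderOf ((1 : ZMod (p ^ u))) = p ^ u := ZMod.addOrderOf_one (p ^ u)
      simp [this, Nat.lcm]
    have h2 : addOrderOf ((((p : ZMod (p ^ (u + v))) ^ v), 0, 0) :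
        ZMod (p ^ (u + v)) × ZMod (p ^ u) × G₁) = p ^ u := by
      rw [Prod.addOrderOf, Prod.addOrderOf, addOrderOf_zero, addOrderOf_zero]
      have hcast : ((p : ZMod (p ^ (u + v))) ^ v) = ((p ^ v : ℕ) : ZMod (p ^ (u + v))) := by
        push_cast; ring
      have hne : p ^ (u + v) ≠ 0 := by positivity
      have : addOrderOf (((p ^ v : ℕ)) : ZMod (p ^ (u + v))) =
          p ^ (u + v) / (p ^ (u + v)).gcd (p ^ v) := ZMod.addOrderOf_coe _ hne
      rw [hcast, this]
      have hg : (p ^ (u + v)).gcd (p ^ v) = p ^ v := by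
        rw [Nat.gcd_eq_right (pow_dvd_pow p (by omega))]
      rw [hg, pow_add, Nat.mul_div_cancel _ (by positivity)]
      simp [Nat.lcm]
    rw [h1, h2]
  · rintro ⟨f, hf⟩
    set a : ZMod (p ^ (u + v)) × ZMod (p ^ u) × G₁ := (1, 0, 0)
    have hsm : (((p : ZMod (p ^ (u + v))) ^ v), (0 : ZMod (p ^ u)), (0 : G₁)) = (p ^ v) • a := by
      simp only [a, Prod.smul_mk, smul_zero, Prod.mk.injEq, nsmul_eq_mul, mul_one]
      exact ⟨by push_cast; ring, trivial⟩
    rw [hsm, map_nsmul] at hf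
    have h2 : (p ^ v) • (f a).2.1 = (1 : ZMod (p ^ u)) := by
      have := congrArg (fun x => x.2.1) hf
      simpa using this
    have hdvd : p ∣ p ^ u := dvd_pow_self p (by omega)
    have := congrArg (ZMod.castHom hdvd (ZMod p)) h2
    simp only [map_nsmul, map_one] at this
    haveI : Fact p.Prime := ⟨hp⟩
    set y := (ZMod.castHom hdvd (ZMod p)) (f a).2.1
    have hy : ((p ^ v : ℕ) : ZMod p) * y = 1 := by
      rw [← nsmul_eq_mul]; exact this
    have hp0 : ((p ^ v : ℕ) : ZMod p) = 0 := by
      push_cast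
      rw [ZMod.natCast_self, zero_pow (by omega)]
    rw [hp0, zero_mul] at hy
    exact zero_ne_one hy
end

section
/- Let G be a finite group and a ∈ G with [G : C(a)] > 3, where C(a) is the centralizer of a. Then the endomorphism graph EG(G) contains a clique of size 5 (hence is non-planar). -/
/-- If `a ∈ G` has centralizer of index greater than `3`, then the endomorphism
graph of `G` contains a clique of size `5` (hence is non-planar). -/
theorem endomorphism_graph_clique_five {G : Type*} [Group G] [Fintype G]
    (a : G) (h : 3 < (Subgroup.centralizer {a}).index) :
    ∃ s : Finset G, s.card = 5 ∧ ∀ x ∈ s, ∀ y ∈ s, x ≠ y →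
      (∃ f : Monoid.End G, f x = y) ∨ (∃ f : Monoid.End G, f y = x) := by
  classical
  set H := Subgroup.centralizer ({a} : Set G) with hH
  have ha : a ≠ 1 := by
    rintro rfl
    have htop : H = ⊤ := by
      ext g; simp [hH, Subgroup.mem_centralizer_iff]
    rw [htop, Subgroup.index_top] at h; omega
  have := Fintype.ofFinite (G ⧸ H)
  have hcard : 4 ≤ (Finset.univ : Finset (G ⧸ H)).card := by
    have heq : H.index = Nat.card (G ⧸ H) := rfl
    rw [heq, Nat.card_eq_fintype_card] at h
    simp only [Finset.card_univ]
    omega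
  obtain ⟨t, -, ht⟩ := Finset.exists_subset_card_eq hcard
  -- conjugation map from coset representatives
  set c : G ⧸ H → G := fun q => q.out * a * q.out⁻¹ with hc
  have hinj : ∀ q r : G ⧸ H, c q = c r → q = r := by
    intro q r hqr
    have hmem : q.out⁻¹ * r.out ∈ H := by
      refine Subgroup.mem_centralizer_iff.mpr ?_
      intro g hg
      rw [Set.mem_singleton_iff] at hg
      rw [hg]
      have heq : q.out * a * q.out⁻¹ = r.out * a * r.out⁻¹ := hqr
      have h2 : a * (q.out⁻¹ * r.out) = q.out⁻¹ * (q.out * a * q.out⁻¹) * r.out := by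
        group
      rw [h2, heq]
      group
    have hq := QuotientGroup.eq.mpr hmem
    rwa [QuotientGroup.out_eq', QuotientGroup.out_eq'] at hq
  have hne1 : ∀ q : G ⧸ H, c q ≠ 1 := by
    intro q hq
    apply ha
    have heq : a = q.out⁻¹ * (c q) * q.out := by rw [hc]; group
    rw [heq, hq]; group
  have hnotmem : (1 : G) ∉ t.image c := by
    simp only [Finset.mem_image, not_exists]
    intro q
    rintro ⟨-, hq⟩
    exact hne1 q hq
  refine ⟨insert 1 (t.image c), ?_, ?_⟩
  · rw [Finset.card_insert_of_notMem hnotmem,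
      Finset.card_image_of_injOn (fun q _ r _ => hinj q r), ht]
  · intro x hx y hy hxy
    rcases Finset.mem_insert.mp hx with rfl | hx'
    · right
      exact ⟨{ toFun := fun _ => 1, map_one' := rfl, map_mul' := by simp }, rfl⟩
    rcases Finset.mem_insert.mp hy with rfl | hy'
    · left
      exact ⟨{ toFun := fun _ => 1, map_one' := rfl, map_mul' := by simp }, rfl⟩
    obtain ⟨q, -, rfl⟩ := Finset.mem_image.mp hx'
    obtain ⟨r, -, rfl⟩ := Finset.mem_image.mp hy'
    left
    refine ⟨(MulAut.conj (r.out * q.out⁻¹)).toMonoidHom, ?_⟩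
    show (r.out * q.out⁻¹) * (c q) * (r.out * q.out⁻¹)⁻¹ = c r
    rw [hc]
    group
end

section
/- Let G be a finite group with |G| > 2. Then the endomorphism graph EG(G) contains a triangle, so its girth is 3; and EG(G) is bipartite if and only if G ≅ Z_2. -/
/-- The constant-one endomorphism. -/
def EGaux.constOne (G : Type*) [Group G] : Monoid.End G :=
  { toFun := fun _ => 1, map_one' := rfl, map_mul' := by simp }

@[simp] lemma EGaux.constOne_apply {G : Type*} [Group G] (x : G) : EGaux.constOne G x = 1 := rfl

lemma EGaux.key {G : Type*} [Group G] [Fintype G] (h : 2 < Fintype.card G) :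
    ∃ a b : G, a ≠ 1 ∧ b ≠ 1 ∧ a ≠ b ∧ ∃ f : Monoid.End G, f a = b := by
  classical
  by_cases hcomm : ∀ x y : G, x * y = y * x
  · letI : CommGroup G := { ‹Group G› with mul_comm := hcomm }
    by_cases h2 : ∀ x : G, x * x = 1
    · -- elementary abelian 2-group: vector space over ZMod 2
      letI : Module (ZMod 2) (Additive G) := AddCommGroup.zmodModule (n := 2) (by
        intro x
        show (2 : ℕ) • x = 0
        rw [two_nsmul]
        exact h2 x.toMul)
      -- two distinct nonidentity elements
      obtain ⟨a, ha, b, hb, hab⟩ : ∃ a ∈ Finset.univ.erase (1 : G),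
          ∃ b ∈ Finset.univ.erase (1 : G), a ≠ b := by
        apply Finset.one_lt_card.mp
        have : Fintype.card G - 1 ≤ (Finset.univ.erase (1 : G)).card := by
          rw [Finset.card_erase_of_mem (Finset.mem_univ _), Finset.card_univ]
        omega
      have ha1 : a ≠ 1 := (Finset.mem_erase.mp ha).1
      have hb1 : b ≠ 1 := (Finset.mem_erase.mp hb).1
      set a' : Additive G := Additive.ofMul a with ha'
      set b' : Additive G := Additive.ofMul b with hb'
      have ha'0 : a' ≠ 0 := ha1
      obtain ⟨φ, hφ⟩ : ∃ φ : Module.Dual (ZMod 2) (Additive G), φ a' ≠ 0 := by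
        by_contra hc
        push_neg at hc
        exact ha'0 ((Module.forall_dual_apply_eq_zero_iff (ZMod 2) a').mp hc)
      have hφ1 : φ a' = 1 := by
        have : ∀ x : ZMod 2, x ≠ 0 → x = 1 := by decide
        exact this _ hφ
      set flin : Additive G →ₗ[ZMod 2] Additive G :=
        (LinearMap.toSpanSingleton (ZMod 2) (Additive G) b').comp φ with hflin
      have hfa : flin a' = b' := by
        simp [hflin, LinearMap.toSpanSingleton, hφ1]
      refine ⟨a, b, ha1, hb1, hab, MonoidHom.toAdditive.symm flin.toAddMonoidHom, ?_⟩
      exact hfa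
    · -- abelian, with an element a with a ≠ a⁻¹: use inversion
      push_neg at h2
      obtain ⟨a, ha⟩ := h2
      have ha1 : a ≠ 1 := by rintro rfl; simp at ha
      refine ⟨a, a⁻¹, ha1, inv_ne_one.mpr ha1, ?_, invMonoidHom, rfl⟩
      intro hx
      exact ha (mul_eq_one_iff_eq_inv.mpr hx)
  · -- nonabelian: use conjugation
    push_neg at hcomm
    obtain ⟨g, a, hga⟩ := hcomm
    have ha1 : a ≠ 1 := by rintro rfl; simp at hga
    have hc1 : g * a * g⁻¹ ≠ 1 := by
      intro hx
      rw [mul_inv_eq_one] at hx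
      exact ha1 (mul_eq_left.mp hx)
    refine ⟨a, g * a * g⁻¹, ha1, hc1, ?_, (MulAut.conj g).toMonoidHom, rfl⟩
    intro hx
    exact hga (eq_mul_inv_iff_mul_eq.mp hx).symm

/-- For any finite group with more than two elements, the endomorphism graph
contains a triangle, hence has girth `3`; and the endomorphism graph is
bipartite iff the group is `Z_2`. -/
theorem endomorphism_graph_girth_three {G : Type*} [Group G] [Fintype G]
    (h : 2 < Fintype.card G) :
    (∃ s : Finset G,
      (SimpleGraph.fromRel
        (fun x y : G => ∃ f : Monoid.End G, f x = y)).IsNClique 3 s) ∧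
    (SimpleGraph.fromRel
        (fun x y : G => ∃ f : Monoid.End G, f x = y)).girth = 3 ∧
    ((SimpleGraph.fromRel
        (fun x y : G => ∃ f : Monoid.End G, f x = y)).Colorable 2 ↔
      Nonempty (G ≃* Multiplicative (ZMod 2))) := by
  classical
  set EG := SimpleGraph.fromRel (fun x y : G => ∃ f : Monoid.End G, f x = y) with hEG
  obtain ⟨a, b, ha1, hb1, hab, f, hf⟩ := EGaux.key h
  have adj1a : EG.Adj 1 a := by
    rw [hEG, SimpleGraph.fromRel_adj]
    exact ⟨Ne.symm ha1, Or.inr ⟨EGaux.constOne G, EGaux.constOne_apply a⟩⟩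
  have adj1b : EG.Adj 1 b := by
    rw [hEG, SimpleGraph.fromRel_adj]
    exact ⟨Ne.symm hb1, Or.inr ⟨EGaux.constOne G, EGaux.constOne_apply b⟩⟩
  have adjab : EG.Adj a b := by
    rw [hEG, SimpleGraph.fromRel_adj]
    exact ⟨hab, Or.inl ⟨f, hf⟩⟩
  have hclique : ∃ s : Finset G, EG.IsNClique 3 s :=
    ⟨{1, a, b}, SimpleGraph.is3Clique_triple_iff.mpr ⟨adj1a, adj1b, adjab⟩⟩
  refine ⟨hclique, ?_, ?_⟩
  · -- girth = 3
    obtain ⟨u, w, hw, hl⟩ :=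
      SimpleGraph.is3Clique_iff_exists_cycle_length_three.mp hclique
    have hle : EG.egirth ≤ 3 := by
      calc EG.egirth ≤ (w.length : ℕ∞) := by
            rw [SimpleGraph.egirth]
            exact iInf₂_le_of_le u w (iInf_le_of_le hw le_rfl)
        _ = 3 := by rw [hl]; rfl
    have heq : EG.egirth = 3 := le_antisymm hle SimpleGraph.three_le_egirth
    rw [SimpleGraph.girth, heq]
    rfl
  · constructor
    · intro hcol
      obtain ⟨s, hs⟩ := hclique
      exact absurd hs (hcol.cliqueFree (by norm_num) s)
    · rintro ⟨e⟩
      have : Fintype.card G = 2 := by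
        rw [Fintype.card_congr e.toEquiv]
        simp
      omega
end

section
/- Let G be a finite abelian group. The identity-deleted directed endomorphism graph of G (the induced subdigraph on G \ {e}) is strongly connected if and only if G is an elementary abelian p-group, i.e., G ≅ (Z_p)^k for some prime p and k ≥ 1. -/
open Module

/-- Along a reachability chain, the order of the target divides the order of the source. -/
private lemma order_dvd_of_reach {G : Type*} [AddCommGroup G] {a b : G}
    (h : Relation.ReflTransGen
      (fun x y : G => x ≠ 0 ∧ y ≠ 0 ∧ x ≠ y ∧ ∃ f : AddMonoid.End G, f x = y) a b) :
    addOrderOf b ∣ addOrderOf a := by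
  induction h with
  | refl => exact dvd_rfl
  | tail _ hstep ih =>
    obtain ⟨_, _, _, f, hf⟩ := hstep
    refine dvd_trans ?_ ih
    apply addOrderOf_dvd_of_nsmul_eq_zero
    rw [← hf, ← map_nsmul, addOrderOf_nsmul_eq_zero, map_zero]

/-- For a finite abelian group `G`, the identity-deleted directed endomorphism
graph is strongly connected iff `G ≅ (Z_p)^k` for some prime `p` and `k ≥ 1`. -/
theorem identity_deleted_digraph_strongly_connected_iff {G : Type*}
    [AddCommGroup G] [Fintype G] :
    ((∃ a : G, a ≠ 0) ∧ ∀ a b : G, a ≠ 0 → b ≠ 0 →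
        Relation.ReflTransGen
          (fun x y : G => x ≠ 0 ∧ y ≠ 0 ∧ x ≠ y ∧ ∃ f : AddMonoid.End G, f x = y)
          a b) ↔
      ∃ (p k : ℕ), p.Prime ∧ 1 ≤ k ∧ Nonempty (G ≃+ (Fin k → ZMod p)) := by
  constructor
  · rintro ⟨⟨a0, ha0⟩, hconn⟩
    have horder : ∀ a b : G, a ≠ 0 → b ≠ 0 → addOrderOf a = addOrderOf b := fun a b ha hb =>
      Nat.dvd_antisymm (order_dvd_of_reach (hconn b a hb ha))
        (order_dvd_of_reach (hconn a b ha hb))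
    set n := addOrderOf a0 with hn
    have hn1 : 1 < n := by
      rcases Nat.lt_or_ge 1 n with h | h
      · exact h
      · interval_cases n
        · exact absurd (addOrderOf_eq_zero_iff.mp hn.symm)
            (not_not.mpr (isOfFinAddOrder_of_finite a0))
        · exact absurd (AddMonoid.addOrderOf_eq_one_iff.mp hn.symm) ha0
    set q := n.minFac with hq
    have hqp : q.Prime := Nat.minFac_prime (by omega)
    have hqd : q ∣ n := Nat.minFac_dvd n
    -- the element (n / q) • a0 has order q
    set c : G := (n / q) • a0 with hc
    have hnq_pos : 0 < n / q := Nat.div_pos (Nat.le_of_dvd (by omega) hqd) hqp.pos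
    have hnq_lt : n / q < n := Nat.div_lt_self (by omega) hqp.one_lt
    have hcne : c ≠ 0 := by
      intro h
      have := addOrderOf_dvd_of_nsmul_eq_zero (h ▸ rfl : (n / q) • a0 = 0)
      rw [← hn] at this
      exact absurd (Nat.le_of_dvd hnq_pos this) (by omega)
    have hqc : q • c = 0 := by
      rw [hc, smul_smul, Nat.mul_div_cancel' hqd, hn]
      exact addOrderOf_nsmul_eq_zero a0
    have hcn : addOrderOf c = n := (horder c a0 hcne ha0).trans hn.symm
    have hnq : n = q := by
      have h1 : addOrderOf c ∣ q := addOrderOf_dvd_of_nsmul_eq_zero hqc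
      rw [hcn] at h1
      exact Nat.dvd_antisymm h1 hqd
    have hp : n.Prime := hnq ▸ hqp
    have hall : ∀ x : G, n • x = 0 := by
      intro x
      rcases eq_or_ne x 0 with rfl | hx
      · simp
      · rw [hn, horder a0 x ha0 hx]
        exact addOrderOf_nsmul_eq_zero x
    letI inst : Module (ZMod n) G := AddCommGroup.zmodModule hall
    haveI : Fact n.Prime := ⟨hp⟩
    haveI : Nontrivial G := ⟨a0, 0, ha0⟩
    haveI hfree : Module.Free (ZMod n) G := Module.Free.of_divisionRing _ _
    haveI hfin : Module.Finite (ZMod n) G := Module.Finite.of_finite (R := ZMod n) (M := G)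
    have b := @Module.finBasis (ZMod n) G _ _ inst hfree _ hfin
    refine ⟨n, finrank (ZMod n) G, hp, ?_, ⟨b.equivFun.toAddEquiv⟩⟩
    by_contra hlt
    push_neg at hlt
    have hk0 : finrank (ZMod n) G = 0 := by omega
    set e := b.equivFun.toAddEquiv with he
    have h1 : e a0 = e 0 := funext fun i => absurd i.2 (by omega)
    exact ha0 (e.injective h1)
  · rintro ⟨p, k, hp, hk, ⟨e⟩⟩
    haveI : Fact p.Prime := ⟨hp⟩
    haveI : Nonempty (Fin k) := ⟨⟨0, hk⟩⟩
    have hone : (fun _ : Fin k => (1 : ZMod p)) ≠ 0 := by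
      intro h
      have := congrFun h (Classical.arbitrary (Fin k))
      exact one_ne_zero this
    constructor
    · refine ⟨e.symm (fun _ => 1), fun h => hone ?_⟩
      have := congrArg e h
      rwa [e.apply_symm_apply, map_zero] at this
    · intro a b ha hb
      rcases eq_or_ne a b with rfl | hab
      · exact Relation.ReflTransGen.refl
      · have hea : e a ≠ 0 := fun h => ha (by simpa using congrArg e.symm h)
        obtain ⟨i, hi⟩ : ∃ i, e a i ≠ 0 := by
          by_contra h
          push_neg at h
          exact hea (funext h)
        refine Relation.ReflTransGen.single ⟨ha, hb, hab, ?_⟩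
        refine ⟨AddMonoidHom.mk' (fun x => e.symm ((e x i * (e a i)⁻¹) • e b)) ?_, ?_⟩
        · intro x y
          rw [← map_add]
          simp [add_mul, add_smul]
        · show e.symm ((e a i * (e a i)⁻¹) • e b) = b
          rw [mul_inv_cancel₀ hi, one_smul, e.symm_apply_apply]
end

section
/- Let G be a finite abelian group. Then the directed power graph of G is a spanning subdigraph of the directed endomorphism graph of G, with equality if and only if G is cyclic. -/
open Finset in
private lemma my_lcm_eq_prod {ι : Type} (s : Finset ι) (n : ι → ℕ)
    (h : ∀ i ∈ s, ∀ j ∈ s, i ≠ j → Nat.Coprime (n i) (n j)) :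
    s.lcm n = ∏ i ∈ s, n i := by
  classical
  induction s using Finset.induction with
  | empty => simp
  | @insert a s ha ih =>
    rw [Finset.lcm_insert, Finset.prod_insert ha,
      ih (fun i hi j hj hij => h i (mem_insert_of_mem hi) j (mem_insert_of_mem hj) hij)]
    have hcop : Nat.Coprime (n a) (∏ i ∈ s, n i) :=
      Nat.Coprime.prod_right fun i hi =>
        h a (mem_insert_self a s) i (mem_insert_of_mem hi) (fun e => ha (e ▸ hi))
    exact hcop.lcm_eq_mul

/-- the projection endomorphism killing coordinate `j` -/
private def projEnd {ι : Type} [DecidableEq ι] (M : ι → Type*) [∀ i, CommMonoid (M i)]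
    (j : ι) : Monoid.End (∀ i, M i) where
  toFun z := Function.update z j 1
  map_one' := by ext i; by_cases h : i = j <;> simp [Function.update_apply, h]
  map_mul' z w := by
    ext i
    by_cases h : i = j
    · subst h; simp
    · simp [Function.update_apply, h]

/-- pairwise coprime product of cyclic is cyclic -/
private lemma cyclic_of_coprime {ι : Type} [Fintype ι] (n : ι → ℕ) (hn : ∀ i, 1 < n i)
    (h : ∀ i j : ι, i ≠ j → Nat.Coprime (n i) (n j)) :
    IsCyclic (∀ i, Multiplicative (ZMod (n i))) := by
  have : ∀ i, NeZero (n i) := fun i => ⟨by have := hn i; omega⟩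
  apply IsCyclic.of_exponent_eq_card
  rw [Monoid.exponent_pi]
  have h1 : ∀ i : ι, Monoid.exponent (Multiplicative (ZMod (n i))) = n i := by
    intro i
    rw [Monoid.exponent_multiplicative, ZMod.exponent]
  simp_rw [h1]
  rw [my_lcm_eq_prod _ n (fun i _ j _ hij => h i j hij), Nat.card_pi]
  congr 1
  funext i
  rw [Nat.card_eq_fintype_card, Fintype.card_multiplicative, ZMod.card]

/-- For a finite abelian group, the directed power graph is a spanning
subdigraph of the directed endomorphism graph, with equality iff the group is
cyclic. -/
theorem power_digraph_subdigraph_endomorphism_digraph {G : Type*} [CommGroup G]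
    [Fintype G] :
    (∀ x y : G, x ≠ y → (∃ r : ℕ, x ^ r = y) → ∃ f : Monoid.End G, f x = y) ∧
    ((∀ x y : G, x ≠ y →
        ((∃ r : ℕ, x ^ r = y) ↔ ∃ f : Monoid.End G, f x = y)) ↔ IsCyclic G) := by
  constructor
  · rintro x y _ ⟨r, rfl⟩
    exact ⟨powMonoidHom r, rfl⟩
  constructor
  · -- condition implies cyclic
    intro hcond
    by_contra hnc
    obtain ⟨ι, hι, n, hn, ⟨e⟩⟩ := CommGroup.equiv_prod_multiplicative_zmod_of_finite G
    classical
    -- there must exist two non-coprime indices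
    have hex : ∃ i j : ι, i ≠ j ∧ ¬ Nat.Coprime (n i) (n j) := by
      by_contra hco
      push_neg at hco
      have : IsCyclic (∀ i, Multiplicative (ZMod (n i))) :=
        cyclic_of_coprime n hn fun i j hij => hco i j hij
      exact hnc (isCyclic_of_surjective e.symm.toMonoidHom e.symm.surjective)
    obtain ⟨i, j, hij, hncop⟩ := hex
    set d := Nat.gcd (n i) (n j) with hd
    have hd1 : d ≠ 1 := hncop
    have hd0 : d ≠ 0 := by
      intro h0
      have := Nat.eq_zero_of_gcd_eq_zero_left (hd ▸ h0)
      have := hn i; omega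
    set p := d.minFac with hp
    have hpp : p.Prime := Nat.minFac_prime hd1
    have hpi : p ∣ n i := (Nat.minFac_dvd d).trans (Nat.gcd_dvd_left _ _)
    have hpj : p ∣ n j := (Nat.minFac_dvd d).trans (Nat.gcd_dvd_right _ _)
    haveI : Fact p.Prime := ⟨hpp⟩
    -- the counterexample
    set H := ∀ i, Multiplicative (ZMod (n i)) with hH
    set x0 : H := fun _ => Multiplicative.ofAdd 1 with hx0
    set f : Monoid.End G :=
      (e.symm.toMonoidHom.comp (projEnd _ j)).comp e.toMonoidHom with hf
    set x : G := e.symm x0 with hx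
    set y : G := f x with hy
    have hfx : (f x : G) = e.symm (Function.update x0 j 1) := by
      show e.symm (Function.update (e (e.symm x0)) j 1) = _
      rw [MulEquiv.apply_symm_apply]
    have hxy : x ≠ y := by
      intro hxyeq
      have h1 : x0 = Function.update x0 j 1 := by
        have h2 := congrArg e hxyeq
        rw [hy, hfx, hx, MulEquiv.apply_symm_apply, MulEquiv.apply_symm_apply] at h2
        exact h2
      have hj := congrFun h1 j
      rw [Function.update_self] at hj
      have hj' : (1 : ZMod (n j)) = 0 := Multiplicative.ofAdd.injective hj
      haveI : Fact (1 < n j) := ⟨hn j⟩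
      exact one_ne_zero hj'
    have := (hcond x y hxy).mpr ⟨f, hy.symm⟩
    obtain ⟨r, hr⟩ := this
    -- apply e to x ^ r = y
    have he : x0 ^ r = Function.update x0 j 1 := by
      have h2 := congrArg e hr
      rw [map_pow, hy, hfx, hx, MulEquiv.apply_symm_apply, MulEquiv.apply_symm_apply] at h2
      exact h2
    have hji : (Multiplicative.ofAdd (1 : ZMod (n j))) ^ r = 1 := by
      have := congrFun he j
      rw [Function.update_self] at this
      exact this
    have hii : (Multiplicative.ofAdd (1 : ZMod (n i))) ^ r = Multiplicative.ofAdd 1 := by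
      have := congrFun he i
      rw [Function.update_of_ne hij] at this
      exact this
    -- translate to ZMod equalities
    have hji' : (r : ZMod (n j)) = 0 := by
      have h3 : r • (1 : ZMod (n j)) = 0 :=
        Multiplicative.ofAdd.injective ((ofAdd_nsmul r (1 : ZMod (n j))).symm.trans hji)
      rwa [nsmul_eq_mul, mul_one] at h3
    have hii' : (r : ZMod (n i)) = 1 := by
      have h3 : r • (1 : ZMod (n i)) = 1 :=
        Multiplicative.ofAdd.injective ((ofAdd_nsmul r (1 : ZMod (n i))).symm.trans hii)
      rwa [nsmul_eq_mul, mul_one] at h3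
    -- push to ZMod p
    have h0 : (r : ZMod p) = 0 := by
      have := congrArg (ZMod.castHom hpj (ZMod p)) hji'
      rwa [map_natCast, map_zero] at this
    have h1 : (r : ZMod p) = 1 := by
      have := congrArg (ZMod.castHom hpi (ZMod p)) hii'
      rwa [map_natCast, map_one] at this
    exact one_ne_zero (h1 ▸ h0)
  · -- cyclic implies every endo arc is a power arc
    intro hcyc x y hne
    constructor
    · rintro ⟨r, rfl⟩; exact ⟨powMonoidHom r, rfl⟩
    · rintro ⟨f, rfl⟩
      obtain ⟨g, hg⟩ := hcyc.exists_generator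
      obtain ⟨k, hk⟩ := mem_powers_iff_mem_zpowers.mpr (hg x)
      obtain ⟨m, hm⟩ := mem_powers_iff_mem_zpowers.mpr (hg (f g))
      have hk' : g ^ k = x := hk
      have hm' : g ^ m = f g := hm
      refine ⟨m, ?_⟩
      rw [← hk', map_pow, ← hm', ← pow_mul, ← pow_mul, mul_comm]
end
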